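/- Let X be a Banach space whose dual satisfies r_{X*}(1) > 0. Suppose (w_n*) is a sequence in X* with ‖w_n*‖ = 1 for all n, w_n* weak*-converges to w*, and a := liminf_{n→∞} ‖w_n* − w*‖ satisfies 0 < a < ‖w*‖. Then a ≤ 1/(r_{X*}(1) + 1). -/
import Mathlib


open Filter Topology Metric NormedSpace ZeroAtInfty

/-- The Opial modulus of the dual `X*`, computed with weak*-null sequences. -/
noncomputable def dualOpialModulus (X : Type*) [NormedAddCommGroup X] [NormedSpace ℝ X] (c : ℝ) : ℝ :=
  sInf { r : ℝ | ∃ (x : X →L[ℝ] ℝ) (xs : ℕ → X →L[ℝ] ℝ), c ≤ ‖x‖ ∧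
    (∀ v : X, Tendsto (fun n => xs n v) atTop (𝓝 0)) ∧
    1 ≤ liminf (fun n => ‖xs n‖) atTop ∧
    r = liminf (fun n => ‖xs n - x‖) atTop - 1 }

private lemma liminf_nonneg_aux (g : ℕ → ℝ) (hg : ∀ n, 0 ≤ g n) :
    0 ≤ liminf g atTop := by
  rw [Filter.liminf_eq]
  by_cases h : BddAbove { a : ℝ | ∀ᶠ n in atTop, a ≤ g n }
  · exact le_csSup h (Filter.Eventually.of_forall hg)
  · rw [Real.sSup_of_not_bddAbove h]

theorem stmt6 (X : Type*) [NormedAddCommGroup X] [NormedSpace ℝ X] [CompleteSpace X]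
    (hr : 0 < dualOpialModulus X 1)
    (w : ℕ → X →L[ℝ] ℝ) (wstar : X →L[ℝ] ℝ)
    (hnorm : ∀ n, ‖w n‖ = 1)
    (hconv : ∀ v : X, Tendsto (fun n => w n v) atTop (𝓝 (wstar v)))
    (a : ℝ) (ha : a = liminf (fun n => ‖w n - wstar‖) atTop)
    (ha0 : 0 < a) (haw : a < ‖wstar‖) :
    a ≤ 1 / (dualOpialModulus X 1 + 1) := by
  set S := { r : ℝ | ∃ (x : X →L[ℝ] ℝ) (xs : ℕ → X →L[ℝ] ℝ), (1:ℝ) ≤ ‖x‖ ∧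
    (∀ v : X, Tendsto (fun n => xs n v) atTop (𝓝 0)) ∧
    1 ≤ liminf (fun n => ‖xs n‖) atTop ∧
    r = liminf (fun n => ‖xs n - x‖) atTop - 1 } with hS
  have hbdd : BddBelow S := by
    refine ⟨-1, fun r hr => ?_⟩
    obtain ⟨x, xs, _, _, _, hre⟩ := hr
    have := liminf_nonneg_aux (fun n => ‖xs n - x‖) (fun n => norm_nonneg _)
    linarith
  -- the witness element
  have hmem : (1/a - 1) ∈ S := by
    refine ⟨-(a⁻¹ • wstar), fun n => a⁻¹ • (w n - wstar), ?_, ?_, ?_, ?_⟩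
    · have h1 : ‖(-(a⁻¹ • wstar) : X →L[ℝ] ℝ)‖ = a⁻¹ * ‖wstar‖ := by
        rw [norm_neg]
        have := norm_smul a⁻¹ wstar
        rwa [Real.norm_eq_abs, abs_of_pos (inv_pos.2 ha0)] at this
      rw [h1, ← div_eq_inv_mul, le_div_iff₀ ha0, one_mul]
      exact haw.le
    · intro v
      have : Tendsto (fun n => w n v - wstar v) atTop (𝓝 0) := by
        simpa using (hconv v).sub_const (wstar v)
      simpa using this.const_mul a⁻¹
    · -- liminf ‖a⁻¹ • (w n - wstar)‖ = a⁻¹ * a = 1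
      have hbd : ∀ n, ‖w n - wstar‖ ≤ 1 + ‖wstar‖ := fun n => by
        calc ‖w n - wstar‖ ≤ ‖w n‖ + ‖wstar‖ := norm_sub_le _ _
        _ = 1 + ‖wstar‖ := by rw [hnorm n]
      have hmap : a⁻¹ * liminf (fun n => ‖w n - wstar‖) atTop
          = liminf (fun n => a⁻¹ * ‖w n - wstar‖) atTop := by
        have hmono : Monotone (fun t : ℝ => a⁻¹ * t) :=
          fun s t hst => mul_le_mul_of_nonneg_left hst (inv_pos.2 ha0).le
        exact hmono.map_liminf_of_continuousAt (fun n => ‖w n - wstar‖)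
          ((continuous_const.mul continuous_id).continuousAt)
          (IsBoundedUnder.isCoboundedUnder_ge ⟨1 + ‖wstar‖,
            Filter.eventually_map.2 (Filter.Eventually.of_forall hbd)⟩)
          ⟨0, Filter.eventually_map.2 (Filter.Eventually.of_forall fun n => norm_nonneg _)⟩
      have : liminf (fun n => ‖a⁻¹ • (w n - wstar)‖) atTop = 1 := by
        have hn : (fun n => ‖a⁻¹ • (w n - wstar)‖) =
            fun n => a⁻¹ * ‖w n - wstar‖ := by
          funext n
          have := norm_smul a⁻¹ (w n - wstar)
          rwa [Real.norm_eq_abs, abs_of_pos (inv_pos.2 ha0)] at this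
        rw [hn, ← hmap, ← ha, inv_mul_cancel₀ ha0.ne']
      rw [this]
    · have hn : (fun n => ‖a⁻¹ • (w n - wstar) - -(a⁻¹ • wstar)‖) =
          fun _ => a⁻¹ := by
        funext n
        have : a⁻¹ • (w n - wstar) - -(a⁻¹ • wstar) = a⁻¹ • w n := by
          rw [smul_sub]; abel
        rw [this]
        have h2 := norm_smul a⁻¹ (w n)
        rw [Real.norm_eq_abs, abs_of_pos (inv_pos.2 ha0), hnorm n, mul_one] at h2
        exact h2
      rw [hn, Filter.liminf_const, one_div]
  have hle : dualOpialModulus X 1 ≤ 1/a - 1 := by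
    rw [dualOpialModulus]
    exact csInf_le hbdd hmem
  have hpos : 0 < dualOpialModulus X 1 + 1 := by linarith
  rw [le_div_iff₀ hpos]
  have : a * (dualOpialModulus X 1 + 1) ≤ a * (1/a) := by
    apply mul_le_mul_of_nonneg_left _ ha0.le
    linarith
  rw [mul_one_div, div_self ha0.ne'] at this
  exact this
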